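/- arXiv:2307.01558 — 2 statements merged into one kernel-verified Lean document; each statement's English description precedes it below -/
import Mathlib

section
/- (von Neumann alternating projections) Let L1 and L2 be complete subspaces of a Hilbert space H, with orthogonal projections P1 and P2 onto L1 and L2 respectively, and let P be the orthogonal projection onto L1 ∩ L2. Then for every x ∈ H, the sequence ((P1 ∘ P2)^n x) converges to P x as n → ∞. -/
open scoped InnerProductSpace

section Stmt12Aux

variable {H : Type*} [NormedAddCommGroup H] [InnerProductSpace ℝ H]
variable {L : Submodule ℝ H} {Q : H →L[ℝ] H}

private theorem aux_fix (hmem : ∀ y : H, Q y ∈ L)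
    (horth : ∀ y : H, ∀ z ∈ L, ⟪y - Q y, z⟫_ℝ = 0) {y : H} (hy : y ∈ L) : Q y = y := by
  have h := horth y (y - Q y) (Submodule.sub_mem L hy (hmem y))
  rw [inner_self_eq_zero, sub_eq_zero] at h
  exact h.symm

private theorem aux_sym (hmem : ∀ y : H, Q y ∈ L)
    (horth : ∀ y : H, ∀ z ∈ L, ⟪y - Q y, z⟫_ℝ = 0) (u v : H) :
    ⟪Q u, v⟫_ℝ = ⟪u, Q v⟫_ℝ := by
  have h1 : ⟪v - Q v, Q u⟫_ℝ = 0 := horth v (Q u) (hmem u)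
  have h2 : ⟪u - Q u, Q v⟫_ℝ = 0 := horth u (Q v) (hmem v)
  rw [inner_sub_left] at h1 h2
  calc ⟪Q u, v⟫_ℝ = ⟪v, Q u⟫_ℝ := real_inner_comm _ _
    _ = ⟪Q v, Q u⟫_ℝ := by linarith
    _ = ⟪Q u, Q v⟫_ℝ := real_inner_comm _ _
    _ = ⟪u, Q v⟫_ℝ := by linarith

private theorem aux_pyth (hmem : ∀ y : H, Q y ∈ L)
    (horth : ∀ y : H, ∀ z ∈ L, ⟪y - Q y, z⟫_ℝ = 0) (y : H) :
    ‖y - Q y‖ ^ 2 = ‖y‖ ^ 2 - ‖Q y‖ ^ 2 := by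
  have h : ⟪y - Q y, Q y⟫_ℝ = 0 := horth y (Q y) (hmem y)
  have e : y = (y - Q y) + Q y := by abel
  have := norm_add_sq_real (y - Q y) (Q y)
  rw [← e, h] at this
  linarith

private theorem aux_contr (hmem : ∀ y : H, Q y ∈ L)
    (horth : ∀ y : H, ∀ z ∈ L, ⟪y - Q y, z⟫_ℝ = 0) (y : H) : ‖Q y‖ ≤ ‖y‖ := by
  have h := aux_pyth hmem horth y
  have h2 : ‖Q y‖ ^ 2 ≤ ‖y‖ ^ 2 := by nlinarith [sq_nonneg ‖y - Q y‖]
  nlinarith [norm_nonneg (Q y), norm_nonneg y]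

end Stmt12Aux

/-- von Neumann alternating projections: Let `P1`, `P2` be the orthogonal
projections of a real Hilbert space `H` onto complete subspaces `L1`, `L2`, and let `P`
be the orthogonal projection onto `L1 ∩ L2`. Then for every `x ∈ H`, the iterates
`(P1 ∘ P2)^n x` converge to `P x`. -/
theorem stmt_12 {H : Type*} [NormedAddCommGroup H] [InnerProductSpace ℝ H] [CompleteSpace H]
    (L1 L2 : Submodule ℝ H) [CompleteSpace L1] [CompleteSpace L2]
    (P1 P2 : H →L[ℝ] H)
    (hP1mem : ∀ y : H, P1 y ∈ L1)
    (hP1orth : ∀ y : H, ∀ z ∈ L1, ⟪y - P1 y, z⟫_ℝ = 0)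
    (hP2mem : ∀ y : H, P2 y ∈ L2)
    (hP2orth : ∀ y : H, ∀ z ∈ L2, ⟪y - P2 y, z⟫_ℝ = 0)
    (P : H →L[ℝ] H)
    (hPmem : ∀ y : H, P y ∈ L1 ⊓ L2)
    (hPorth : ∀ y : H, ∀ z ∈ L1 ⊓ L2, ⟪y - P y, z⟫_ℝ = 0)
    (x : H) :
    Filter.Tendsto (fun n => (fun y => P1 (P2 y))^[n] x) Filter.atTop (nhds (P x)) := by
  classical
  -- the alternating family of projections and subspaces
  obtain ⟨Q, Lk, hQP1, hQP2, hLkL1, hLkL2⟩ :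
      ∃ (Q : ℕ → (H →L[ℝ] H)) (Lk : ℕ → Submodule ℝ H),
        (∀ k, Even k → Q k = P1) ∧ (∀ k, ¬ Even k → Q k = P2) ∧
        (∀ k, Even k → Lk k = L1) ∧ (∀ k, ¬ Even k → Lk k = L2) :=
    ⟨fun k => if Even k then P1 else P2, fun k => if Even k then L1 else L2,
      fun k h => if_pos h, fun k h => if_neg h, fun k h => if_pos h, fun k h => if_neg h⟩
  have hQmem : ∀ k (y : H), Q k y ∈ Lk k := by
    intro k y
    by_cases h : Even k
    · rw [hQP1 k h, hLkL1 k h]; exact hP1mem y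
    · rw [hQP2 k h, hLkL2 k h]; exact hP2mem y
  have hQorth : ∀ k (y : H), ∀ z ∈ Lk k, ⟪y - Q k y, z⟫_ℝ = 0 := by
    intro k y z hz
    by_cases h : Even k
    · rw [hLkL1 k h] at hz; rw [hQP1 k h]; exact hP1orth y z hz
    · rw [hLkL2 k h] at hz; rw [hQP2 k h]; exact hP2orth y z hz
  have hQpar : ∀ a b, a % 2 = b % 2 → Q a = Q b := by
    intro a b hab
    have hiff : Even a ↔ Even b := by rw [Nat.even_iff, Nat.even_iff, hab]
    by_cases h : Even a
    · rw [hQP1 a h, hQP1 b (hiff.mp h)]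
    · rw [hQP2 a h, hQP2 b (fun hb => h (hiff.mpr hb))]
  have hLpar : ∀ a b, a % 2 = b % 2 → Lk a = Lk b := by
    intro a b hab
    have hiff : Even a ↔ Even b := by rw [Nat.even_iff, Nat.even_iff, hab]
    by_cases h : Even a
    · rw [hLkL1 a h, hLkL1 b (hiff.mp h)]
    · rw [hLkL2 a h, hLkL2 b (fun hb => h (hiff.mpr hb))]
  -- the alternating sequence
  obtain ⟨z, hz0, hzs⟩ :
      ∃ z : ℕ → H, z 0 = x ∧ ∀ k, z (k+1) = Q (k+1) (z k) :=
    ⟨fun n => Nat.rec (motive := fun _ => H) x (fun k zk => Q (k+1) zk) n, rfl, fun k => rfl⟩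
  have hzmem : ∀ k, 1 ≤ k → z k ∈ Lk k := by
    intro k hk
    obtain ⟨j, rfl⟩ : ∃ j, k = j + 1 := ⟨k - 1, by omega⟩
    rw [hzs]; exact hQmem _ _
  have hsym : ∀ k (u v : H), ⟪Q k u, v⟫_ℝ = ⟪u, Q k v⟫_ℝ :=
    fun k => aux_sym (hQmem k) (hQorth k)
  have hfix : ∀ k (y : H), y ∈ Lk k → Q k y = y :=
    fun k y hy => aux_fix (hQmem k) (hQorth k) hy
  have hpyth : ∀ k (y : H), ‖y - Q k y‖ ^ 2 = ‖y‖ ^ 2 - ‖Q k y‖ ^ 2 :=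
    fun k => aux_pyth (hQmem k) (hQorth k)
  have hcontr : ∀ k (y : H), ‖Q k y‖ ≤ ‖y‖ :=
    fun k => aux_contr (hQmem k) (hQorth k)
  -- peeling lemma
  have peel : ∀ b a, 1 ≤ a → a % 2 ≠ b % 2 → ⟪z a, z b⟫_ℝ = ⟪z (a + b), x⟫_ℝ := by
    intro b
    induction b with
    | zero => intro a _ _; rw [hz0, Nat.add_zero]
    | succ b ih =>
        intro a ha hpar
        have hq : Q (b+1) = Q (a+1) := hQpar _ _ (by omega)
        calc ⟪z a, z (b+1)⟫_ℝ = ⟪z a, Q (b+1) (z b)⟫_ℝ := by rw [hzs]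
          _ = ⟪Q (b+1) (z a), z b⟫_ℝ := (hsym (b+1) (z a) (z b)).symm
          _ = ⟪z (a+1), z b⟫_ℝ := by rw [hq, ← hzs]
          _ = ⟪z (a+1+b), x⟫_ℝ := ih (a+1) (by omega) (by omega)
          _ = ⟪z (a+(b+1)), x⟫_ℝ := by ring_nf
  -- norms as inner products with x
  have hnormsq : ∀ k, 1 ≤ k → ⟪z k, z k⟫_ℝ = ⟪z (2*k-1), x⟫_ℝ := by
    intro k hk
    obtain ⟨j, rfl⟩ : ∃ j, k = j + 1 := ⟨k - 1, by omega⟩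
    have e : 2 * (j+1) - 1 = j + 1 + j := by omega
    rw [e]
    calc ⟪z (j+1), z (j+1)⟫_ℝ = ⟪z (j+1), Q (j+1) (z j)⟫_ℝ := by rw [hzs]
      _ = ⟪Q (j+1) (z (j+1)), z j⟫_ℝ := (hsym (j+1) _ _).symm
      _ = ⟪z (j+1), z j⟫_ℝ := by rw [hfix (j+1) _ (hzmem (j+1) (by omega))]
      _ = ⟪z (j+1+j), x⟫_ℝ := peel j (j+1) (by omega) (by omega)
  -- cross inner products
  have hcross : ∀ m n, 1 ≤ m → 1 ≤ n →
      ⟪z (2*m), z (2*n)⟫_ℝ = ⟪z (m+n), z (m+n)⟫_ℝ := by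
    intro m n hm hn
    obtain ⟨j, hj⟩ : ∃ j, 2 * n = j + 1 := ⟨2*n - 1, by omega⟩
    have hq : Q (j+1) = Q (2*m) := hQpar _ _ (by omega)
    have hmem2m : z (2*m) ∈ Lk (j+1) := by
      rw [hLpar (j+1) (2*m) (by omega)]
      exact hzmem (2*m) (by omega)
    calc ⟪z (2*m), z (2*n)⟫_ℝ = ⟪z (2*m), Q (j+1) (z j)⟫_ℝ := by rw [hj, hzs]
      _ = ⟪Q (j+1) (z (2*m)), z j⟫_ℝ := (hsym _ _ _).symm
      _ = ⟪z (2*m), z j⟫_ℝ := by rw [hfix (j+1) _ hmem2m]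
      _ = ⟪z (2*m + j), x⟫_ℝ := peel j (2*m) (by omega) (by omega)
      _ = ⟪z (2*(m+n)-1), x⟫_ℝ := by congr 2; omega
      _ = ⟪z (m+n), z (m+n)⟫_ℝ := (hnormsq (m+n) (by omega)).symm
  -- the squared norms, decreasing, convergent
  set f : ℕ → ℝ := fun k => ‖z k‖ ^ 2 with hfdef
  have hf_anti : Antitone f := by
    apply antitone_nat_of_succ_le
    intro k
    have h1 := hcontr (k+1) (z k)
    rw [← hzs] at h1
    have h0 := norm_nonneg (z (k+1))
    simp only [hfdef]
    nlinarith
  have hf_bdd : BddBelow (Set.range f) := ⟨0, by rintro r ⟨k, rfl⟩; positivity⟩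
  obtain ⟨c, hfc⟩ : ∃ c : ℝ, Filter.Tendsto f Filter.atTop (nhds c) :=
    ⟨_, tendsto_atTop_ciInf hf_anti hf_bdd⟩
  -- the even subsequence is Cauchy
  have hdist : ∀ m n, 1 ≤ m → 1 ≤ n →
      ‖z (2*m) - z (2*n)‖ ^ 2 = f (2*m) + f (2*n) - 2 * f (m+n) := by
    intro m n hm hn
    have h1 := norm_sub_sq_real (z (2*m)) (z (2*n))
    rw [hcross m n hm hn, real_inner_self_eq_norm_sq] at h1
    simp only [hfdef]
    linarith
  have hcauchy : CauchySeq (fun n => z (2*n)) := by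
    rw [Metric.cauchySeq_iff']
    intro ε hε
    have hδ : (0:ℝ) < ε^2/5 := by positivity
    obtain ⟨N0, hN0⟩ := (Metric.tendsto_atTop.mp hfc) (ε^2/5) hδ
    refine ⟨max N0 1, fun n hn => ?_⟩
    set N := max N0 1 with hNdef
    have hN1 : 1 ≤ N := le_max_right _ _
    have hfar : ∀ k, N ≤ k → |f k - c| < ε^2/5 := by
      intro k hk
      have := hN0 k (le_trans (le_max_left _ _) hk)
      rwa [Real.dist_eq] at this
    have h2n : |f (2*n) - c| < ε^2/5 := hfar _ (by omega)
    have h2N : |f (2*N) - c| < ε^2/5 := hfar _ (by omega)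
    have hnN : |f (n+N) - c| < ε^2/5 := hfar _ (by omega)
    have hsq : ‖z (2*n) - z (2*N)‖ ^ 2 < ε ^ 2 := by
      rw [hdist n N (by omega) hN1]
      rw [abs_lt] at h2n h2N hnN
      nlinarith
    have : ‖z (2*n) - z (2*N)‖ < ε :=
      lt_of_pow_lt_pow_left₀ 2 (le_of_lt hε) hsq
    rwa [dist_eq_norm]
  obtain ⟨w, hw⟩ := cauchySeq_tendsto_of_complete hcauchy
  -- convergence of f along relevant subsequences
  have htwo : Filter.Tendsto (fun n : ℕ => 2*n) Filter.atTop Filter.atTop :=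
    Filter.tendsto_atTop_mono (fun n => by simp only [id_eq]; omega) Filter.tendsto_id
  have htwo1 : Filter.Tendsto (fun n : ℕ => 2*n+1) Filter.atTop Filter.atTop :=
    Filter.tendsto_atTop_mono (fun n => by simp only [id_eq]; omega) Filter.tendsto_id
  have hf2 : Filter.Tendsto (fun n => f (2*n)) Filter.atTop (nhds c) := hfc.comp htwo
  have hf21 : Filter.Tendsto (fun n => f (2*n+1)) Filter.atTop (nhds c) := hfc.comp htwo1
  -- the odd subsequence converges to the same limit w
  have hodd_diff : Filter.Tendsto (fun n => z (2*n+1) - z (2*n)) Filter.atTop (nhds 0) := by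
    have hsq0 : Filter.Tendsto (fun n => ‖z (2*n+1) - z (2*n)‖ ^ 2) Filter.atTop (nhds 0) := by
      have heq : ∀ n, ‖z (2*n+1) - z (2*n)‖ ^ 2 = f (2*n) - f (2*n+1) := by
        intro n
        have h1 := hpyth (2*n+1) (z (2*n))
        rw [← hzs] at h1
        rw [norm_sub_rev]
        simp only [hfdef]
        linarith
      have h2 : Filter.Tendsto (fun n => f (2*n) - f (2*n+1)) Filter.atTop (nhds (c - c)) :=
        hf2.sub hf21
      rw [sub_self] at h2
      exact h2.congr (fun n => (heq n).symm)
    have hnorm0 : Filter.Tendsto (fun n => ‖z (2*n+1) - z (2*n)‖) Filter.atTop (nhds 0) := by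
      have h3 := (Real.continuous_sqrt.tendsto 0).comp hsq0
      simp only [Function.comp_def, Real.sqrt_zero] at h3
      refine h3.congr (fun n => ?_)
      rw [Real.sqrt_sq (norm_nonneg _)]
    exact tendsto_zero_iff_norm_tendsto_zero.mpr hnorm0
  have hodd : Filter.Tendsto (fun n => z (2*n+1)) Filter.atTop (nhds w) := by
    have h4 := hw.add hodd_diff
    rw [add_zero] at h4
    exact h4.congr (fun n => by abel)
  -- w lies in L1 ⊓ L2
  have hL1closed : IsClosed (L1 : Set H) :=
    (completeSpace_coe_iff_isComplete.mp ‹CompleteSpace L1›).isClosed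
  have hL2closed : IsClosed (L2 : Set H) :=
    (completeSpace_coe_iff_isComplete.mp ‹CompleteSpace L2›).isClosed
  have hwL1 : w ∈ L1 := by
    refine hL1closed.mem_of_tendsto hw (Filter.eventually_atTop.mpr ⟨1, fun n hn => ?_⟩)
    have h5 := hzmem (2*n) (by omega)
    rwa [hLkL1 (2*n) (by simp)] at h5
  have hwL2 : w ∈ L2 := by
    refine hL2closed.mem_of_tendsto hodd (Filter.eventually_atTop.mpr ⟨0, fun n hn => ?_⟩)
    have h5 := hzmem (2*n+1) (by omega)
    rwa [hLkL2 (2*n+1) (by simp [Nat.even_add_one, parity_simps])] at h5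
  -- x - w is orthogonal to L1 ⊓ L2
  have horthz : ∀ n, ∀ u ∈ L1 ⊓ L2, ⟪x - z n, u⟫_ℝ = 0 := by
    intro n
    induction n with
    | zero => intro u hu; rw [hz0, sub_self, inner_zero_left]
    | succ n ih =>
        intro u hu
        have huLk : u ∈ Lk (n+1) := by
          by_cases h : Even (n+1)
          · rw [hLkL1 _ h]; exact hu.1
          · rw [hLkL2 _ h]; exact hu.2
        have e : x - z (n+1) = (x - z n) + (z n - Q (n+1) (z n)) := by
          rw [hzs]; abel
        rw [e, inner_add_left, ih u hu, hQorth (n+1) (z n) u huLk, add_zero]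
  have horthw : ∀ u ∈ L1 ⊓ L2, ⟪x - w, u⟫_ℝ = 0 := by
    intro u hu
    have hcont : Filter.Tendsto (fun n => ⟪x - z (2*n), u⟫_ℝ) Filter.atTop
        (nhds ⟪x - w, u⟫_ℝ) :=
      (Filter.Tendsto.const_sub x hw).inner tendsto_const_nhds
    have hzero : (fun n => ⟪x - z (2*n), u⟫_ℝ) = fun _ => (0:ℝ) :=
      funext fun n => horthz (2*n) u hu
    rw [hzero] at hcont
    exact tendsto_nhds_unique hcont tendsto_const_nhds
  -- w = P x
  have hwP : w = P x := by
    have hd : w - P x ∈ L1 ⊓ L2 := Submodule.sub_mem _ ⟨hwL1, hwL2⟩ (hPmem x)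
    have h1 : ⟪x - P x, w - P x⟫_ℝ = 0 := hPorth x _ hd
    have h2 : ⟪x - w, w - P x⟫_ℝ = 0 := horthw _ hd
    have e : w - P x = (x - P x) - (x - w) := by abel
    have h3 : ⟪w - P x, w - P x⟫_ℝ = 0 := by
      have h4 := inner_sub_left (𝕜 := ℝ) (x - P x) (x - w) (w - P x)
      rw [← e, h1, h2, sub_zero] at h4
      exact h4
    rwa [inner_self_eq_zero, sub_eq_zero] at h3
  -- identify the iterates with the even subsequence
  have hiter : ∀ n, (fun y => P1 (P2 y))^[n] x = z (2*n) := by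
    intro n
    induction n with
    | zero => simpa using hz0.symm
    | succ n ih =>
        have e1 : z (2*n+1) = P2 (z (2*n)) := by
          rw [hzs, hQP2 (2*n+1) (by simp [Nat.even_add_one, parity_simps])]
        have e2 : z (2*(n+1)) = P1 (z (2*n+1)) := by
          have e : 2*(n+1) = (2*n+1) + 1 := by omega
          rw [e, hzs, hQP1 (2*n+1+1) (by simp [Nat.even_add_one, parity_simps])]
        rw [Function.iterate_succ_apply', ih, e2, e1]
  rw [← hwP]
  exact hw.congr (fun n => (hiter n).symm)
end

section
/- (Halperin) Let L1, …, L_k be complete subspaces of a Hilbert space H, with orthogonal projections P1, …, P_k onto them respectively, and let P be the orthogonal projection onto the intersection L1 ∩ ⋯ ∩ L_k. Then for every x ∈ H, the sequence ((P1 ∘ P2 ∘ ⋯ ∘ P_k)^n x) converges to P x as n → ∞. -/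
/-!
Each projection satisfies `‖y - P y‖² = ‖y‖² - ‖P y‖²`, and squaring the triangle inequality shows
that the product `T` of the projections still satisfies `‖y - T y‖² ≤ C (‖y‖² - ‖T y‖²)`. Hence
`‖T y‖ = ‖y‖` only for common fixed points, so the fixed space of `T` is `⨅ i, L i`, and
telescoping the decreasing sequence `‖Tⁿ y‖²` gives `Tⁿ y - Tⁿ⁺¹ y → 0`, i.e. `Tⁿ → 0` on the
range of `T - 1`. For a contraction, every vector orthogonal to that range is fixed, so the range
is dense in the orthogonal complement of the fixed space; the iterates are equicontinuous, so
`Tⁿ → 0` on that whole complement, while `Tⁿ` is the identity on the fixed space.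
-/

open Filter Topology
open scoped InnerProductSpace NNReal

theorem FunLike.coe_list_prod_eq_foldr_comp {F α : Type*} [FunLike F α α] [Monoid F]
    [IsMulApplyEqComp F α] [IsOneApplyEqSelf F α] (l : List F) :
    ⇑l.prod = (l.map (⇑)).foldr (· ∘ ·) id := by
  induction l with
  | nil => exact coe_one_eq_id
  | cons f l ih => rw [List.prod_cons, coe_mul_eq_comp, ih, List.map_cons, List.foldr_cons]

namespace ContinuousLinearMap

variable {𝕜 E : Type*} [RCLike 𝕜] [NormedAddCommGroup E]

section NormedSpace

variable [NormedSpace 𝕜 E]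

theorem iterate_map_sub' (T : E →L[𝕜] E) (n : ℕ) (x y : E) :
    T^[n] (x - y) = T^[n] x - T^[n] y :=
  iterate_map_sub (T : E →+ E) n x y

/-- A quantitative, linear form of Bruck–Reich strong nonexpansiveness. -/
def IsStronglyNonexpansive (T : E →L[𝕜] E) : Prop :=
  ∃ C : ℝ≥0, ∀ y, ‖y - T y‖ ^ 2 ≤ C * (‖y‖ ^ 2 - ‖T y‖ ^ 2)

namespace IsStronglyNonexpansive

variable {T T₁ T₂ : E →L[𝕜] E}

theorem norm_apply_le (hT : IsStronglyNonexpansive T) (y : E) : ‖T y‖ ≤ ‖y‖ := by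
  obtain ⟨C, hC⟩ := hT
  by_contra! h
  have hsq : ‖y‖ ^ 2 < ‖T y‖ ^ 2 := by gcongr
  have : ‖y - T y‖ ^ 2 ≤ 0 :=
    (hC y).trans (mul_nonpos_of_nonneg_of_nonpos C.2 (by linarith))
  rw [sq_nonpos_iff, norm_eq_zero, sub_eq_zero] at this
  exact h.ne (by rw [← this])

theorem apply_eq_self_of_norm_eq (hT : IsStronglyNonexpansive T) {y : E} (h : ‖T y‖ = ‖y‖) :
    T y = y := by
  obtain ⟨C, hC⟩ := hT
  have := hC y
  rw [h, sub_self, mul_zero, sq_nonpos_iff, norm_eq_zero, sub_eq_zero] at this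
  exact this.symm

theorem one : IsStronglyNonexpansive (1 : E →L[𝕜] E) :=
  ⟨0, fun y => by simp⟩

theorem mul (h₁ : IsStronglyNonexpansive T₁) (h₂ : IsStronglyNonexpansive T₂) :
    IsStronglyNonexpansive (T₁ * T₂) := by
  obtain ⟨C₁, hC₁⟩ := h₁
  obtain ⟨C₂, hC₂⟩ := h₂
  refine ⟨2 * (C₁ + C₂), fun y => ?_⟩
  set z := T₂ y
  have hz : ‖z‖ ≤ ‖y‖ := norm_apply_le ⟨C₂, hC₂⟩ y
  have hTz : ‖T₁ z‖ ≤ ‖z‖ := norm_apply_le ⟨C₁, hC₁⟩ z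
  have hd₁ : 0 ≤ ‖z‖ ^ 2 - ‖T₁ z‖ ^ 2 := by nlinarith [norm_nonneg (T₁ z)]
  have hd₂ : 0 ≤ ‖y‖ ^ 2 - ‖z‖ ^ 2 := by nlinarith [norm_nonneg z]
  have htri : ‖y - T₁ z‖ ≤ ‖y - z‖ + ‖z - T₁ z‖ := norm_sub_le_norm_sub_add_norm_sub _ _ _
  have h₁ := hC₁ z
  have h₂ := hC₂ y
  rw [mul_apply_eq_comp]
  push_cast
  nlinarith [norm_nonneg (y - T₁ z), sq_nonneg (‖y - z‖ - ‖z - T₁ z‖), C₁.2, C₂.2,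
    mul_nonneg C₁.2 hd₂, mul_nonneg C₂.2 hd₁]

theorem list_prod {l : List (E →L[𝕜] E)} (hl : ∀ T ∈ l, IsStronglyNonexpansive T) :
    IsStronglyNonexpansive l.prod :=
  List.prod_induction _ (fun _ _ => mul) one hl

theorem mul_apply_eq_self (h₁ : IsStronglyNonexpansive T₁) (h₂ : IsStronglyNonexpansive T₂)
    {y : E} (h : (T₁ * T₂) y = y) : T₁ y = y ∧ T₂ y = y := by
  have hT₂ : T₂ y = y := by
    refine h₂.apply_eq_self_of_norm_eq (le_antisymm (h₂.norm_apply_le y) ?_)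
    calc ‖y‖ = ‖T₁ (T₂ y)‖ := by rw [← mul_apply_eq_comp, h]
      _ ≤ ‖T₂ y‖ := h₁.norm_apply_le _
  rw [mul_apply_eq_comp, hT₂] at h
  exact ⟨h, hT₂⟩

theorem list_prod_apply_eq_self_iff {l : List (E →L[𝕜] E)}
    (hl : ∀ T ∈ l, IsStronglyNonexpansive T) {y : E} :
    l.prod y = y ↔ ∀ T ∈ l, T y = y := by
  induction l with
  | nil => simp
  | cons T l ih =>
    rw [List.forall_mem_cons] at hl ⊢
    rw [List.prod_cons, ← ih hl.2]
    refine ⟨(hl.1.mul_apply_eq_self (list_prod hl.2) ·), fun ⟨hT, hl⟩ => ?_⟩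
    rw [mul_apply_eq_comp, hl, hT]

theorem tendsto_iterate_sub_iterate_succ (hT : IsStronglyNonexpansive T) (y : E) :
    Tendsto (fun n => T^[n] y - T^[n + 1] y) atTop (𝓝 0) := by
  obtain ⟨C, hC⟩ := hT
  set a : ℕ → ℝ := fun n => ‖T^[n] y‖ ^ 2
  have ha : Antitone a := antitone_nat_of_succ_le fun n => by
    simp only [a, Function.iterate_succ_apply']
    gcongr
    exact norm_apply_le ⟨C, hC⟩ _
  have hlim : Tendsto a atTop (𝓝 (⨅ n, a n)) :=
    tendsto_atTop_ciInf ha ⟨0, by rintro _ ⟨n, rfl⟩; positivity⟩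
  have hdiff : Tendsto (fun n => C * (a n - a (n + 1))) atTop (𝓝 0) := by
    simpa using (hlim.sub (hlim.comp (tendsto_add_atTop_nat 1))).const_mul (C : ℝ)
  have hsq : Tendsto (fun n => ‖T^[n] y - T^[n + 1] y‖ ^ 2) atTop (𝓝 0) :=
    squeeze_zero (fun n => by positivity)
      (fun n => by simpa only [a, Function.iterate_succ_apply'] using hC (T^[n] y)) hdiff
  rw [tendsto_zero_iff_norm_tendsto_zero]
  simpa [Function.comp_def, Real.sqrt_sq, norm_nonneg] using
    (Real.continuous_sqrt.tendsto 0).comp hsq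

theorem lipschitzWith_one (hT : IsStronglyNonexpansive T) : LipschitzWith 1 T :=
  AddMonoidHomClass.lipschitz_of_bound_nnnorm T 1 fun y => by
    simpa [← NNReal.coe_le_coe] using hT.norm_apply_le y

end IsStronglyNonexpansive

end NormedSpace

section InnerProductSpace

variable [InnerProductSpace 𝕜 E] {T : E →L[𝕜] E}

/-- For a contraction, `⟪T w, w⟫ = ‖w‖²` forces `T w = w`. -/
theorem apply_eq_self_of_inner_sub_eq_zero (hT : ∀ y, ‖T y‖ ≤ ‖y‖) {w : E}
    (hw : ∀ y, ⟪T y - y, w⟫_𝕜 = 0) : T w = w := by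
  have h : ⟪T w, w⟫_𝕜 = ⟪w, w⟫_𝕜 := by rw [← sub_eq_zero, ← inner_sub_left]; exact hw w
  refine eq_of_norm_le_re_inner_eq_norm_sq (𝕜 := 𝕜) (hT w) ?_
  rw [h, inner_self_eq_norm_sq]

namespace IsStronglyNonexpansive

theorem tendsto_iterate_zero_of_mem_orthogonal [CompleteSpace E]
    (hT : IsStronglyNonexpansive T) {K : Submodule 𝕜 E} (hK : ∀ y, T y = y → y ∈ K) {v : E}
    (hv : v ∈ Kᗮ) : Tendsto (fun n => T^[n] v) atTop (𝓝 0) := by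
  set R := LinearMap.range ((T - 1 : E →L[𝕜] E) : E →ₗ[𝕜] E)
  have hclosed : IsClosed {v | Tendsto (fun n => T^[n] v) atTop (𝓝 0)} :=
    (LipschitzWith.uniformEquicontinuous _ 1 fun n => by
      simpa using hT.lipschitzWith_one.iterate n).equicontinuous.isClosed_setOfPred_tendsto
      continuous_const
  have hrange : (R : Set E) ⊆ {v | Tendsto (fun n => T^[n] v) atTop (𝓝 0)} := by
    rintro _ ⟨z, rfl⟩
    have h := (hT.tendsto_iterate_sub_iterate_succ z).neg
    simp only [neg_sub, neg_zero] at h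
    simpa [iterate_map_sub', Function.iterate_succ_apply] using h
  have hdense : Kᗮ ≤ R.topologicalClosure := by
    rw [← Submodule.orthogonal_orthogonal_eq_closure]
    refine Submodule.orthogonal_le fun w hw => hK w ?_
    exact apply_eq_self_of_inner_sub_eq_zero hT.norm_apply_le fun y =>
      (Submodule.mem_orthogonal _ _).1 hw _ ⟨y, rfl⟩
  exact closure_minimal hrange hclosed (hdense hv)

theorem tendsto_iterate [CompleteSpace E] (hT : IsStronglyNonexpansive T)
    {K : Submodule 𝕜 E} (hK : ∀ y, T y = y ↔ y ∈ K) {x p : E} (hp : p ∈ K)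
    (hxp : x - p ∈ Kᗮ) : Tendsto (fun n => T^[n] x) atTop (𝓝 p) := by
  have hfix : ∀ n, T^[n] p = p := Function.iterate_fixed ((hK p).2 hp)
  have hsplit : ∀ n, T^[n] x = p + T^[n] (x - p) := fun n => by
    rw [iterate_map_sub', hfix, add_sub_cancel]
  simpa only [hsplit, add_zero] using
    tendsto_const_nhds.add (hT.tendsto_iterate_zero_of_mem_orthogonal (fun y => (hK y).1) hxp)

end IsStronglyNonexpansive

end InnerProductSpace

end ContinuousLinearMap

theorem Submodule.isStronglyNonexpansive_starProjection {𝕜 E : Type*} [RCLike 𝕜]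
    [NormedAddCommGroup E] [InnerProductSpace 𝕜 E] (K : Submodule 𝕜 E)
    [K.HasOrthogonalProjection] : K.starProjection.IsStronglyNonexpansive :=
  ⟨1, fun y => by
    rw [NNReal.coe_one, one_mul, ← starProjection_orthogonal_val,
      norm_sq_eq_add_norm_sq_starProjection y K, add_sub_cancel_left]⟩

/-- Halperin: Let `P 0, …, P (k-1)` be the orthogonal projections of a
real Hilbert space `H` onto complete subspaces `L 0, …, L (k-1)`, and let `Pinf` be the
orthogonal projection onto the intersection `⨅ i, L i`. Then for every `x ∈ H`, the
iterates `(P 0 ∘ P 1 ∘ ⋯ ∘ P (k-1))^n x` converge to `Pinf x`. -/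
theorem stmt_13 {H : Type*} [NormedAddCommGroup H] [InnerProductSpace ℝ H] [CompleteSpace H]
    {k : ℕ} (L : Fin k → Submodule ℝ H) [∀ i, CompleteSpace (L i)]
    (P : Fin k → H →L[ℝ] H)
    (hPmem : ∀ i, ∀ y : H, P i y ∈ L i)
    (hPorth : ∀ i, ∀ y : H, ∀ z ∈ L i, ⟪y - P i y, z⟫_ℝ = 0)
    (Pinf : H →L[ℝ] H)
    (hPinfmem : ∀ y : H, Pinf y ∈ ⨅ i, L i)
    (hPinforth : ∀ y : H, ∀ z ∈ ⨅ i, L i, ⟪y - Pinf y, z⟫_ℝ = 0)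
    (x : H) :
    Filter.Tendsto
      (fun n => ((List.ofFn fun i => (fun y => P i y)).foldr (· ∘ ·) id)^[n] x)
      Filter.atTop (nhds (Pinf x)) := by
  have hP : ∀ i, P i = (L i).starProjection := fun i => ContinuousLinearMap.ext fun y =>
    ((L i).eq_starProjection_of_mem_of_inner_eq_zero (hPmem i y) (hPorth i y)).symm
  have hl : ∀ T ∈ List.ofFn P, T.IsStronglyNonexpansive :=
    List.forall_mem_ofFn_iff.2 fun i => hP i ▸ (L i).isStronglyNonexpansive_starProjection
  have hfix : ∀ y, (List.ofFn P).prod y = y ↔ y ∈ ⨅ i, L i := fun y => by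
    simp only [ContinuousLinearMap.IsStronglyNonexpansive.list_prod_apply_eq_self_iff hl,
      List.forall_mem_ofFn_iff, hP, Submodule.starProjection_eq_self_iff, Submodule.mem_iInf]
  have hcoe : (List.ofFn fun i => (fun y => P i y)).foldr (· ∘ ·) id = ⇑(List.ofFn P).prod := by
    rw [FunLike.coe_list_prod_eq_foldr_comp, List.map_ofFn]
    rfl
  rw [hcoe]
  exact (ContinuousLinearMap.IsStronglyNonexpansive.list_prod hl).tendsto_iterate hfix
    (hPinfmem x) ((Submodule.mem_orthogonal' _ _).2 (hPinforth x))
end
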